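/- Cyclic derivatives satisfy the chain rule: if Q and Q' are finite quivers with the same vertex set Q_0, and φ : K⟪Q⟫ → K⟪Q'⟫ is a continuous algebra homomorphism restricting to the identity on S = K·Q_0, then for any potential W on Q and any arrow a of Q', ∂_a(φ(W)) = Σ_{b ∈ Q_1} Δ_a(φ(b)) • φ(∂_b W), where Δ_a(p) = Σ_{α_i = a} α_k⋯α_{i+1} ⊗ α_{i-1}⋯α_1 for a path p = α_k⋯α_1, and (u ⊗ v) • g = v g u. -/

import Mathlib

/-!
Write `Δ_a(p) • g` for `deltaBullet K a p g`, so that `∂_a p = Δ_a(p) • 1`. The product rule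
`Δ_a(pq) • g = Δ_a(p) • (q g) + Δ_a(q) • (g p)` gives, by induction on the length of a word `w`,
`Δ_a(φ w) • g = Σ_b Δ_a(φ b) • (Δ_b(w) • g)`, where on the right the tensor factors of `Δ_b(w)`
are mapped by `φ` before they act on `g`. This extends linearly to all `W`, and for `g = 1` the
inner term is `φ (Δ_b(W) • 1) = φ (∂_b W)`.
-/

open MonoidAlgebra

/-- The cyclic derivative of a single word at the letter `a`. -/
noncomputable def cyclicDerivWord (K : Type*) [CommRing K] {E : Type*} [DecidableEq E]
    (a : E) (w : List E) : MonoidAlgebra K (FreeMonoid E) :=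
  ((List.range w.length).map fun i =>
    if w[i]? = some a then
      MonoidAlgebra.single (FreeMonoid.ofList (w.drop (i + 1) ++ w.take i)) (1 : K)
    else 0).sum

/-- The cyclic derivative at `a`, extended linearly. -/
noncomputable def cyclicDeriv (K : Type*) [CommRing K] {E : Type*} [DecidableEq E]
    (a : E) : MonoidAlgebra K (FreeMonoid E) →ₗ[K] MonoidAlgebra K (FreeMonoid E) :=
  Finsupp.lift (MonoidAlgebra K (FreeMonoid E)) K (FreeMonoid E)
    (fun w => cyclicDerivWord K a (FreeMonoid.toList w)) ∘ₗ
    (MonoidAlgebra.coeffLinearEquiv K).toLinearMap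

/-- `Δ_a(w) • g` for a single word `w`: for each occurrence of `a` in `w`, we
obtain the term `(right part of w) * g * (left part of w)`. -/
noncomputable def deltaBulletWord (K : Type*) [CommRing K] {E : Type*} [DecidableEq E]
    (a : E) (w : List E) (g : MonoidAlgebra K (FreeMonoid E)) :
    MonoidAlgebra K (FreeMonoid E) :=
  ((List.range w.length).map fun i =>
    if w[i]? = some a then
      MonoidAlgebra.single (FreeMonoid.ofList (w.drop (i + 1))) (1 : K) * g *
        MonoidAlgebra.single (FreeMonoid.ofList (w.take i)) (1 : K)
    else 0).sum

/-- `Δ_a(p) • g`, extended linearly in `p`. -/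
noncomputable def deltaBullet (K : Type*) [CommRing K] {E : Type*} [DecidableEq E]
    (a : E) (p g : MonoidAlgebra K (FreeMonoid E)) : MonoidAlgebra K (FreeMonoid E) :=
  p.coeff.sum fun w c => c • deltaBulletWord K a (FreeMonoid.toList w) g

section Along

variable {E : Type*} [DecidableEq E] {A : Type*} [Ring A]

/-- `deltaBulletWord` with the two tensor factors of `Δ_a(w)` evaluated in `A` through `ψ`;
`deltaBulletWord K` is the case `ψ = of K (FreeMonoid E)`. -/
noncomputable def deltaBulletWordAlong (ψ : FreeMonoid E →* A) (a : E) (w : List E) (g : A) : A :=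
  ((List.range w.length).map fun i =>
    if w[i]? = some a then
      ψ (FreeMonoid.ofList (w.drop (i + 1))) * g * ψ (FreeMonoid.ofList (w.take i))
    else 0).sum

variable (ψ : FreeMonoid E →* A) (a : E)

@[simp]
lemma deltaBulletWordAlong_nil (g : A) : deltaBulletWordAlong ψ a [] g = 0 := by
  simp [deltaBulletWordAlong]

lemma deltaBulletWordAlong_cons (e : E) (u : List E) (g : A) :
    deltaBulletWordAlong ψ a (e :: u) g =
      (if e = a then ψ (FreeMonoid.ofList u) * g else 0) +
        deltaBulletWordAlong ψ a u (g * ψ (FreeMonoid.of e)) := by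
  simp only [deltaBulletWordAlong, List.length_cons, List.range_succ_eq_map, List.map_cons,
    List.sum_cons, List.map_map, Function.comp_def, List.getElem?_cons_zero,
    List.getElem?_cons_succ, List.drop_succ_cons, List.take_succ_cons, List.drop_zero,
    List.take_zero, FreeMonoid.ofList_nil, FreeMonoid.ofList_cons, map_one, map_mul, mul_one,
    Option.some.injEq, mul_assoc]

lemma deltaBulletWordAlong_add (w : List E) (g h : A) :
    deltaBulletWordAlong ψ a w (g + h) =
      deltaBulletWordAlong ψ a w g + deltaBulletWordAlong ψ a w h := by
  simp only [deltaBulletWordAlong, ← List.sum_map_add]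
  congr 1
  refine List.map_congr_left fun i _ => ?_
  split_ifs <;> simp only [mul_add, add_mul, add_zero]

@[simp]
lemma deltaBulletWordAlong_zero (w : List E) : deltaBulletWordAlong ψ a w 0 = 0 := by
  simpa using deltaBulletWordAlong_add ψ a w 0 0

lemma deltaBulletWordAlong_smul {K : Type*} [CommRing K] [Algebra K A] (w : List E) (c : K)
    (g : A) : deltaBulletWordAlong ψ a w (c • g) = c • deltaBulletWordAlong ψ a w g := by
  simp only [deltaBulletWordAlong, List.smul_sum, List.map_map, Function.comp_def, smul_ite,
    smul_zero, mul_smul_comm, smul_mul_assoc]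

lemma deltaBulletWordAlong_append (u v : List E) (g : A) :
    deltaBulletWordAlong ψ a (u ++ v) g =
      deltaBulletWordAlong ψ a u (ψ (FreeMonoid.ofList v) * g) +
        deltaBulletWordAlong ψ a v (g * ψ (FreeMonoid.ofList u)) := by
  induction u generalizing g with
  | nil => simp
  | cons e t ih =>
    simp only [List.cons_append, deltaBulletWordAlong_cons, ih, FreeMonoid.ofList_append,
      FreeMonoid.ofList_cons, map_mul, mul_assoc, add_assoc]

lemma map_deltaBulletWordAlong {B F : Type*} [Ring B] [FunLike F A B] [RingHomClass F A B]
    (φ : F) (w : List E) (g : A) :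
    φ (deltaBulletWordAlong ψ a w g) = deltaBulletWordAlong ((φ : A →* B).comp ψ) a w (φ g) := by
  simp only [deltaBulletWordAlong, map_list_sum, List.map_map, Function.comp_def, apply_ite φ,
    map_mul, map_zero, MonoidHom.coe_comp, MonoidHom.coe_coe]

end Along

section AlongAlgebra

variable {K : Type*} [CommRing K] {E : Type*} [DecidableEq E] {A : Type*} [Ring A] [Algebra K A]

noncomputable def deltaBulletAlong (ψ : FreeMonoid E →* A) (a : E)
    (p : MonoidAlgebra K (FreeMonoid E)) (g : A) : A :=
  p.coeff.sum fun w c => c • deltaBulletWordAlong ψ a (FreeMonoid.toList w) g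

variable (ψ : FreeMonoid E →* A) (a : E)

lemma deltaBulletAlong_single (w : FreeMonoid E) (c : K) (g : A) :
    deltaBulletAlong ψ a (single w c) g = c • deltaBulletWordAlong ψ a (FreeMonoid.toList w) g :=
  Finsupp.sum_single_index (zero_smul K _)

@[simp]
lemma deltaBulletAlong_zero_left (g : A) : deltaBulletAlong ψ a (0 : MonoidAlgebra K _) g = 0 :=
  Finsupp.sum_zero_index

lemma deltaBulletAlong_add_left (p q : MonoidAlgebra K (FreeMonoid E)) (g : A) :
    deltaBulletAlong ψ a (p + q) g = deltaBulletAlong ψ a p g + deltaBulletAlong ψ a q g :=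
  Finsupp.sum_add_index' (fun _ => zero_smul K _) fun _ _ _ => add_smul _ _ _

lemma deltaBulletAlong_smul_left (c : K) (p : MonoidAlgebra K (FreeMonoid E)) (g : A) :
    deltaBulletAlong ψ a (c • p) g = c • deltaBulletAlong ψ a p g := by
  simp only [deltaBulletAlong, MonoidAlgebra.coeff_smul, Finsupp.smul_sum, smul_smul,
    Finsupp.sum_smul_index', zero_smul, forall_const, smul_eq_mul]

@[simp]
lemma deltaBulletAlong_zero_right (p : MonoidAlgebra K (FreeMonoid E)) :
    deltaBulletAlong ψ a p 0 = 0 := by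
  simp [deltaBulletAlong]

lemma deltaBulletAlong_add_right (p : MonoidAlgebra K (FreeMonoid E)) (g h : A) :
    deltaBulletAlong ψ a p (g + h) = deltaBulletAlong ψ a p g + deltaBulletAlong ψ a p h := by
  simp only [deltaBulletAlong, deltaBulletWordAlong_add, smul_add, Finsupp.sum_add]

lemma deltaBulletAlong_smul_right (c : K) (p : MonoidAlgebra K (FreeMonoid E)) (g : A) :
    deltaBulletAlong ψ a p (c • g) = c • deltaBulletAlong ψ a p g := by
  simp only [deltaBulletAlong, deltaBulletWordAlong_smul, Finsupp.smul_sum, smul_comm c]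

lemma map_deltaBulletAlong {B F : Type*} [Ring B] [Algebra K B] [FunLike F A B]
    [AlgHomClass F K A B] (φ : F) (p : MonoidAlgebra K (FreeMonoid E)) (g : A) :
    φ (deltaBulletAlong ψ a p g) = deltaBulletAlong ((φ : A →* B).comp ψ) a p (φ g) := by
  simp only [deltaBulletAlong, map_finsuppSum, map_smul, map_deltaBulletWordAlong]

end AlongAlgebra

section FreeAlgebra

variable {K : Type*} [CommRing K] {E : Type*} [DecidableEq E] (a : E)

lemma deltaBullet_eq_deltaBulletAlong (p g : MonoidAlgebra K (FreeMonoid E)) :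
    deltaBullet K a p g = deltaBulletAlong (of K (FreeMonoid E)) a p g :=
  rfl

lemma cyclicDeriv_eq_deltaBullet_one (p : MonoidAlgebra K (FreeMonoid E)) :
    cyclicDeriv K a p = deltaBullet K a p 1 := by
  change (p.coeff.sum fun w c => c • cyclicDerivWord K a (FreeMonoid.toList w)) = _
  refine Finsupp.sum_congr fun w _ => ?_
  simp only [cyclicDerivWord, deltaBulletWord, mul_one, single_mul_single, FreeMonoid.ofList_append]

/-- `Δ_a` is a derivation into `K⟨E⟩ ⊗ K⟨E⟩` with its outer bimodule structure. -/
lemma deltaBullet_mul (p q g : MonoidAlgebra K (FreeMonoid E)) :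
    deltaBullet K a (p * q) g = deltaBullet K a p (q * g) + deltaBullet K a q (g * p) := by
  simp only [deltaBullet_eq_deltaBulletAlong]
  induction p using MonoidAlgebra.induction_linear generalizing g with
  | zero => simp
  | add p₁ p₂ h₁ h₂ =>
    simp only [add_mul, mul_add, deltaBulletAlong_add_left, deltaBulletAlong_add_right, h₁, h₂]
    abel
  | single w c =>
    induction q using MonoidAlgebra.induction_linear generalizing g with
    | zero => simp
    | add q₁ q₂ h₁ h₂ =>
      simp only [add_mul, mul_add, deltaBulletAlong_add_left, deltaBulletAlong_add_right, h₁, h₂]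
      abel
    | single v d =>
      rw [single_mul_single, deltaBulletAlong_single, deltaBulletAlong_single,
        deltaBulletAlong_single, FreeMonoid.toList_mul, deltaBulletWordAlong_append,
        FreeMonoid.ofList_toList, FreeMonoid.ofList_toList, ← smul_of v d, ← smul_of w c]
      simp only [smul_mul_assoc, mul_smul_comm, deltaBulletWordAlong_smul, smul_smul, smul_add,
        mul_comm d c]

end FreeAlgebra

section ChainRule

variable {K : Type*} [CommRing K] {E E' : Type*} [DecidableEq E] [DecidableEq E'] [Fintype E]
  (φ : MonoidAlgebra K (FreeMonoid E) →ₐ[K] MonoidAlgebra K (FreeMonoid E')) (a : E')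

lemma deltaBullet_map_of (w : FreeMonoid E) (g : MonoidAlgebra K (FreeMonoid E')) :
    deltaBullet K a (φ (of K _ w)) g =
      ∑ b : E, deltaBullet K a (φ (single (FreeMonoid.of b) 1))
        (deltaBulletWordAlong ((φ : _ →* _).comp (of K _)) b (FreeMonoid.toList w) g) := by
  induction w using FreeMonoid.inductionOn' generalizing g with
  | one =>
    rw [map_one, map_one, one_def, deltaBullet_eq_deltaBulletAlong, deltaBulletAlong_single]
    simp [deltaBullet_eq_deltaBulletAlong]
  | of_mul e t ih =>
    rw [map_mul, map_mul, deltaBullet_mul, ih, FreeMonoid.toList_of_mul]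
    simp only [deltaBulletWordAlong_cons, deltaBullet_eq_deltaBulletAlong,
      deltaBulletAlong_add_right, Finset.sum_add_distrib, apply_ite, deltaBulletAlong_zero_right,
      Finset.sum_ite_eq, Finset.mem_univ, if_true, MonoidHom.coe_comp, Function.comp_apply,
      FreeMonoid.ofList_toList, MonoidHom.coe_coe, of_apply]

lemma deltaBullet_map (W : MonoidAlgebra K (FreeMonoid E)) (g : MonoidAlgebra K (FreeMonoid E')) :
    deltaBullet K a (φ W) g =
      ∑ b : E, deltaBullet K a (φ (single (FreeMonoid.of b) 1))
        (deltaBulletAlong ((φ : _ →* _).comp (of K _)) b W g) := by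
  induction W using MonoidAlgebra.induction_linear with
  | zero => simp [deltaBullet_eq_deltaBulletAlong]
  | add p q hp hq =>
    simp only [map_add, deltaBullet_eq_deltaBulletAlong, deltaBulletAlong_add_left,
      deltaBulletAlong_add_right, Finset.sum_add_distrib] at hp hq ⊢
    rw [hp, hq]
  | single w c =>
    simp only [deltaBulletAlong_single, deltaBullet_eq_deltaBulletAlong,
      deltaBulletAlong_smul_right]
    rw [← smul_of, map_smul, deltaBulletAlong_smul_left, ← deltaBullet_eq_deltaBulletAlong,
      deltaBullet_map_of, Finset.smul_sum]
    simp only [deltaBullet_eq_deltaBulletAlong]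

end ChainRule

/-- The chain rule for cyclic derivatives. -/
theorem cyclicDeriv_chain_rule (K : Type*) [CommRing K]
    {E E' : Type*} [DecidableEq E] [DecidableEq E'] [Fintype E]
    (φ : MonoidAlgebra K (FreeMonoid E) →ₐ[K] MonoidAlgebra K (FreeMonoid E'))
    (W : MonoidAlgebra K (FreeMonoid E)) (a : E') :
    cyclicDeriv K a (φ W) =
      ∑ b : E, deltaBullet K a (φ (MonoidAlgebra.single (FreeMonoid.of b) 1))
        (φ (cyclicDeriv K b W)) := by
  rw [cyclicDeriv_eq_deltaBullet_one, deltaBullet_map]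
  refine Finset.sum_congr rfl fun b _ => ?_
  rw [cyclicDeriv_eq_deltaBullet_one, deltaBullet_eq_deltaBulletAlong b, map_deltaBulletAlong,
    map_one]
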